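/- Let N ≥ 1 and let u₁, u₂ : (Fin N → ℝ³) → ℝ³ be rotation-equivariant maps, i.e. u_k (fun i ↦ R.mulVec (X i)) = R.mulVec (u_k X) for every rotation R ∈ SO(3) and every configuration X. Fix a configuration X : Fin N → ℝ³ and define q₁(X) = u₁(X)/‖u₁(X)‖, ũ₂(X) = u₂(X) − ⟪u₂(X), q₁(X)⟫ • q₁(X), q₂(X) = ũ₂(X)/‖ũ₂(X)‖, and q₃(X) = q₁(X) ×₃ q₂(X) (vector cross product). Let Q(X) be the 3×3 real matrix whose columns are q₁(X), q₂(X), q₃(X). Assume the nondegeneracy conditions u₁(X) ≠ 0 and ũ₂(X) ≠ 0. Then for every rotation R ∈ SO(3), Q(fun i ↦ R.mulVec (X i)) = R * Q(X). -/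

import Mathlib

open Matrix
open scoped RealInnerProductSpace

/-- ℝ³ with the Euclidean inner product and norm. -/
abbrev E3 : Type := EuclideanSpace ℝ (Fin 3)

/-- First canonical axis: `q₁(X) = u₁(X) / ‖u₁(X)‖`. -/
noncomputable def qOne {N : ℕ} (u₁ : (Fin N → E3) → E3) (X : Fin N → E3) : E3 :=
  ‖u₁ X‖⁻¹ • u₁ X

/-- Gram–Schmidt residual: `ũ₂(X) = u₂(X) − ⟪u₂(X), q₁(X)⟫ • q₁(X)`. -/
noncomputable def uTwoTilde {N : ℕ} (u₁ u₂ : (Fin N → E3) → E3) (X : Fin N → E3) : E3 :=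
  u₂ X - ⟪u₂ X, qOne u₁ X⟫ • qOne u₁ X

/-- Second canonical axis: `q₂(X) = ũ₂(X) / ‖ũ₂(X)‖`. -/
noncomputable def qTwo {N : ℕ} (u₁ u₂ : (Fin N → E3) → E3) (X : Fin N → E3) : E3 :=
  ‖uTwoTilde u₁ u₂ X‖⁻¹ • uTwoTilde u₁ u₂ X

/-- Third canonical axis: `q₃(X) = q₁(X) ×₃ q₂(X)`. -/
noncomputable def qThree {N : ℕ} (u₁ u₂ : (Fin N → E3) → E3) (X : Fin N → E3) : E3 :=
  (WithLp.toLp 2 (crossProduct (qOne u₁ X) (qTwo u₁ u₂ X)) : E3)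

/-- The canonical frame `Q(X)` with columns `q₁(X), q₂(X), q₃(X)`. -/
noncomputable def Qframe {N : ℕ} (u₁ u₂ : (Fin N → E3) → E3) (X : Fin N → E3) :
    Matrix (Fin 3) (Fin 3) ℝ :=
  Matrix.of fun i j => (![qOne u₁ X, qTwo u₁ u₂ X, qThree u₁ u₂ X] j) i

/-! Normalisation and the Gram–Schmidt step commute with every linear isometry, so `q₁` and
`q₂` are equivariant; `q₃` is too because a rotation `R` commutes with the cross product, which
follows from `(R a ×₃ R b)ᵀ R = det R · (a ×₃ b)`. -/

namespace Matrix

theorem cross_mulVec_vecMul {R : Type*} [CommRing R] (A : Matrix (Fin 3) (Fin 3) R)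
    (a b : Fin 3 → R) : (A *ᵥ a) ⨯₃ (A *ᵥ b) ᵥ* A = A.det • a ⨯₃ b := by
  ext i
  fin_cases i <;>
    simp only [cross_apply, vecMul, mulVec, dotProduct, Fin.sum_univ_three, det_fin_three,
      Pi.smul_apply, smul_eq_mul, Fin.zero_eta, Fin.mk_one, Fin.reduceFinMk, cons_val] <;> ring

theorem cross_mulVec_of_special_orthogonal {A : Matrix (Fin 3) (Fin 3) ℝ}
    (hA : Aᵀ * A = 1) (hdet : A.det = 1) (a b : Fin 3 → ℝ) :
    (A *ᵥ a) ⨯₃ (A *ᵥ b) = A *ᵥ (a ⨯₃ b) := by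
  have hA' : A * Aᵀ = 1 := mul_eq_one_comm.mp hA
  calc (A *ᵥ a) ⨯₃ (A *ᵥ b) = A *ᵥ ((A *ᵥ a) ⨯₃ (A *ᵥ b) ᵥ* A) := by
        rw [← mulVec_transpose, mulVec_mulVec, hA', one_mulVec]
    _ = A *ᵥ (a ⨯₃ b) := by rw [cross_mulVec_vecMul, hdet, one_smul]

variable {n : Type*} [Fintype n] [DecidableEq n] {A : Matrix n n ℝ}

theorem inner_toEuclideanLin_toEuclideanLin (hA : Aᵀ * A = 1) (x y : EuclideanSpace ℝ n) :
    ⟪A.toEuclideanLin x, A.toEuclideanLin y⟫ = ⟪x, y⟫ := by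
  simp only [EuclideanSpace.inner_eq_star_dotProduct, star_trivial, toLpLin_apply]
  rw [dotProduct_mulVec, vecMul_mulVec, hA, vecMul_one]

noncomputable def toEuclideanIsometry (A : Matrix n n ℝ) (hA : Aᵀ * A = 1) :
    EuclideanSpace ℝ n →ₗᵢ[ℝ] EuclideanSpace ℝ n :=
  A.toEuclideanLin.isometryOfInner (inner_toEuclideanLin_toEuclideanLin hA)

theorem toEuclideanIsometry_apply (hA : Aᵀ * A = 1) (x : EuclideanSpace ℝ n) :
    A.toEuclideanIsometry hA x = WithLp.toLp 2 (A *ᵥ x) :=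
  rfl

end Matrix

section Frame

variable {N : ℕ} {u₁ u₂ : (Fin N → E3) → E3} {X Y : Fin N → E3} (f : E3 →ₗᵢ[ℝ] E3)

theorem qOne_eq_map (h₁ : u₁ Y = f (u₁ X)) : qOne u₁ Y = f (qOne u₁ X) := by
  rw [qOne, qOne, h₁, f.norm_map, f.map_smul]

theorem uTwoTilde_eq_map (h₁ : u₁ Y = f (u₁ X)) (h₂ : u₂ Y = f (u₂ X)) :
    uTwoTilde u₁ u₂ Y = f (uTwoTilde u₁ u₂ X) := by
  rw [uTwoTilde, uTwoTilde, qOne_eq_map f h₁, h₂, f.inner_map_map, f.map_sub, f.map_smul]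

theorem qTwo_eq_map (h₁ : u₁ Y = f (u₁ X)) (h₂ : u₂ Y = f (u₂ X)) :
    qTwo u₁ u₂ Y = f (qTwo u₁ u₂ X) := by
  rw [qTwo, qTwo, uTwoTilde_eq_map f h₁ h₂, f.norm_map, f.map_smul]

theorem qThree_eq_mulVec {R : Matrix (Fin 3) (Fin 3) ℝ} (hR : Rᵀ * R = 1) (hdet : R.det = 1)
    (h₁ : u₁ Y = R.toEuclideanIsometry hR (u₁ X)) (h₂ : u₂ Y = R.toEuclideanIsometry hR (u₂ X)) :
    qThree u₁ u₂ Y = WithLp.toLp 2 (R *ᵥ qThree u₁ u₂ X) := by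
  simp only [qThree, qOne_eq_map _ h₁, qTwo_eq_map _ h₁ h₂, toEuclideanIsometry_apply,
    WithLp.ofLp_toLp, cross_mulVec_of_special_orthogonal hR hdet]

theorem Qframe_eq_mul {R : Matrix (Fin 3) (Fin 3) ℝ}
    (h₁ : qOne u₁ Y = WithLp.toLp 2 (R *ᵥ qOne u₁ X))
    (h₂ : qTwo u₁ u₂ Y = WithLp.toLp 2 (R *ᵥ qTwo u₁ u₂ X))
    (h₃ : qThree u₁ u₂ Y = WithLp.toLp 2 (R *ᵥ qThree u₁ u₂ X)) :
    Qframe u₁ u₂ Y = R * Qframe u₁ u₂ X := by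
  ext i j
  fin_cases j <;> simp [Qframe, h₁, h₂, h₃, mul_apply, mulVec, dotProduct]

end Frame

theorem frame_equivariance_general (N : ℕ)
    (u₁ u₂ : (Fin N → E3) → E3)
    (hu₁ : ∀ (R : Matrix (Fin 3) (Fin 3) ℝ), Rᵀ * R = 1 → R.det = 1 →
      ∀ X : Fin N → E3, u₁ (fun i => (WithLp.toLp 2 (R.mulVec (X i)) : E3)) = (WithLp.toLp 2 (R.mulVec (u₁ X)) : E3))
    (hu₂ : ∀ (R : Matrix (Fin 3) (Fin 3) ℝ), Rᵀ * R = 1 → R.det = 1 →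
      ∀ X : Fin N → E3, u₂ (fun i => (WithLp.toLp 2 (R.mulVec (X i)) : E3)) = (WithLp.toLp 2 (R.mulVec (u₂ X)) : E3))
    (X : Fin N → E3) :
    ∀ (R : Matrix (Fin 3) (Fin 3) ℝ), Rᵀ * R = 1 → R.det = 1 →
      Qframe u₁ u₂ (fun i => (WithLp.toLp 2 (R.mulVec (X i)) : E3)) = R * Qframe u₁ u₂ X := by
  intro R hR hdet
  let f := R.toEuclideanIsometry hR
  have h₁ : u₁ (f ∘ X) = f (u₁ X) := hu₁ R hR hdet X
  have h₂ : u₂ (f ∘ X) = f (u₂ X) := hu₂ R hR hdet X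
  exact Qframe_eq_mul (qOne_eq_map f h₁) (qTwo_eq_map f h₁ h₂) (qThree_eq_mulVec hR hdet h₁ h₂)

/-- **Frame equivariance.** If `u₁, u₂` are rotation-equivariant and the nondegeneracy
conditions `u₁(X) ≠ 0`, `ũ₂(X) ≠ 0` hold, then `Q(R • X) = R * Q(X)` for all `R ∈ SO(3)`. -/
theorem frame_equivariance (N : ℕ) (hN : 1 ≤ N)
    (u₁ u₂ : (Fin N → E3) → E3)
    (hu₁ : ∀ (R : Matrix (Fin 3) (Fin 3) ℝ), Rᵀ * R = 1 → R.det = 1 →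
      ∀ X : Fin N → E3, u₁ (fun i => (WithLp.toLp 2 (R.mulVec (X i)) : E3)) = (WithLp.toLp 2 (R.mulVec (u₁ X)) : E3))
    (hu₂ : ∀ (R : Matrix (Fin 3) (Fin 3) ℝ), Rᵀ * R = 1 → R.det = 1 →
      ∀ X : Fin N → E3, u₂ (fun i => (WithLp.toLp 2 (R.mulVec (X i)) : E3)) = (WithLp.toLp 2 (R.mulVec (u₂ X)) : E3))
    (X : Fin N → E3)
    (h₁ : u₁ X ≠ 0) (h₂ : uTwoTilde u₁ u₂ X ≠ 0) :
    ∀ (R : Matrix (Fin 3) (Fin 3) ℝ), Rᵀ * R = 1 → R.det = 1 →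
      Qframe u₁ u₂ (fun i => (WithLp.toLp 2 (R.mulVec (X i)) : E3)) = R * Qframe u₁ u₂ X :=
  frame_equivariance_general N u₁ u₂ hu₁ hu₂ X
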